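/- arXiv:2106.09767 — 5 statements merged into one kernel-verified Lean document; each statement's English description precedes it below -/
import Mathlib

section
/- Let (F,v) be a valued field of equal characteristic (char F = char Fv) with value group Γ, let q be a prime number, and let t ∈ F be such that the q cosets qΓ, qΓ + v(t), qΓ + 2v(t), …, qΓ + (q−1)v(t) are pairwise distinct in Γ. Assume F contains a primitive q-th root of unity, and let K = F(u) where u^q = t (so K/F is a cyclic extension of degree q). Then the image under the residue map of the set of norms, with 0 removed, equals exactly the set of nonzero q-th powers of the residue field: res(N_{K/F}(K)) \ {0} = (Fv^×)^q. -/
open scoped Classical in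
/-- The residue map `res : O_v → Fv` of a valued field, extended to all of `F` by sending
elements of `F \ O_v` to `0`. -/
noncomputable def residueExt {F : Type*} [Field F] {Γ₀ : Type*}
    [LinearOrderedCommGroupWithZero Γ₀] (v : Valuation F Γ₀) (x : F) :
    IsLocalRing.ResidueField v.valuationSubring :=
  if h : x ∈ v.valuationSubring then IsLocalRing.residue _ ⟨x, h⟩ else 0

/-!
Write `a = ∑ cᵢ uⁱ`. The norm of `a` is the determinant of the matrix of multiplication by `a`
in the basis `(uⁱ)`, and the `q`-th power of the valuation of the Leibniz term of a permutation
`σ` is `∏ⱼ w(σ j - j)`, where `w(i) = v(cᵢ)^q v(t)^i`. The nonzero weights lie in distinct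
cosets of `Γ^q`, so one of them, `w(i₀)`, is strictly largest, and the term of the cyclic shift
`j ↦ i₀ + j` strictly dominates all others. If `v(N a) = 1` this forces `w(i₀) = 1`, hence
`i₀ = 0`, `v(c₀) = 1` and `N a ≡ c₀^q` modulo the maximal ideal. Conversely `N c = c^q` for
`c ∈ F`.
-/

section ResidueExt

variable {F : Type*} [Field F] {Γ₀ : Type*} [LinearOrderedCommGroupWithZero Γ₀]
  {v : Valuation F Γ₀}

lemma residueExt_of_le_one {x : F} (hx : v x ≤ 1) :
    residueExt v x = IsLocalRing.residue _ ⟨x, hx⟩ :=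
  dif_pos hx

lemma residueExt_ne_zero_iff {x : F} : residueExt v x ≠ 0 ↔ v x = 1 := by
  by_cases hx : v x ≤ 1
  · rw [residueExt_of_le_one hx, Ne, IsLocalRing.residue_eq_zero_iff,
      Valuation.mem_maximalIdeal_iff, not_lt]
    exact ⟨hx.antisymm, ge_of_eq⟩
  · rw [residueExt, dif_neg (show x ∉ v.valuationSubring from hx)]
    exact iff_of_false (not_not.2 rfl) fun h => hx h.le

lemma residueExt_eq_of_val_sub_lt_one {x y : F} (hy : v y ≤ 1) (h : v (x - y) < 1) :
    residueExt v x = residueExt v y := by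
  have hx : v x ≤ 1 := by simpa using v.map_add_le h.le hy
  rw [residueExt_of_le_one hx, residueExt_of_le_one hy, ← sub_eq_zero, ← map_sub,
    IsLocalRing.residue_eq_zero_iff, Valuation.mem_maximalIdeal_iff]
  exact h

lemma residueExt_pow {x : F} (hx : v x ≤ 1) (n : ℕ) :
    residueExt v (x ^ n) = residueExt v x ^ n := by
  have hxn : v (x ^ n) ≤ 1 := by rw [map_pow]; exact pow_le_one' hx n
  rw [residueExt_of_le_one hxn, residueExt_of_le_one hx, ← map_pow]
  rfl

lemma exists_residueExt_eq (z : IsLocalRing.ResidueField v.valuationSubring) :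
    ∃ x : F, v x ≤ 1 ∧ residueExt v x = z := by
  obtain ⟨x, rfl⟩ := IsLocalRing.residue_surjective z
  exact ⟨x, x.2, residueExt_of_le_one x.2⟩

end ResidueExt

lemma Valuation.map_units_int_smul {R Γ₀ : Type*} [Ring R] [LinearOrderedCommGroupWithZero Γ₀]
    (v : Valuation R Γ₀) (s : ℤˣ) (x : R) : v (s • x) = v x := by
  rcases Int.units_eq_one_or s with rfl | rfl <;> simp

open Finset in
lemma prod_lt_pow_card_of_forall_lt {Γ₀ ι α : Type*} [LinearOrderedCommGroupWithZero Γ₀]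
    [Fintype ι] {W : α → Γ₀} {a₀ : α} (hmax : ∀ a ≠ a₀, W a < W a₀) {g : ι → α} {j₀ : ι}
    (hj₀ : g j₀ ≠ a₀) :
    ∏ j, W (g j) < W a₀ ^ Fintype.card ι := by
  classical
  have hrest : ∏ j ∈ univ.erase j₀, W (g j) ≤ W a₀ ^ (univ.erase j₀).card :=
    prod_le_pow_card _ _ _ fun j _ => (eq_or_ne (g j) a₀).elim (fun h => h ▸ le_rfl)
      fun h => (hmax _ h).le
  have hpos : 0 < W a₀ ^ (univ.erase j₀).card :=
    pow_pos (zero_le.trans_lt (hmax _ hj₀)) _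
  calc ∏ j, W (g j) = W (g j₀) * ∏ j ∈ univ.erase j₀, W (g j) :=
        (mul_prod_erase _ _ (mem_univ _)).symm
    _ < W a₀ * W a₀ ^ (univ.erase j₀).card :=
        mul_lt_mul_of_lt_of_le_of_nonneg_of_pos (hmax _ hj₀) hrest zero_le hpos
    _ = W a₀ ^ Fintype.card ι := by
        rw [← pow_succ', card_erase_of_mem (mem_univ _), card_univ,
          Nat.sub_add_cancel (Fintype.card_pos_iff.2 ⟨j₀⟩)]

section TwistedCirculant

open Finset Matrix

variable {R : Type*} [CommRing R] {q : ℕ} [NeZero q]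

/-- The matrix of multiplication by `∑ cᵢ uⁱ` in the basis `(uⁱ)_{i < q}` when `u ^ q = t`:
`i - j` is taken mod `q`, and the factor `t` appears exactly when `(i - j) + j` wraps around. -/
def twistedCirculant (t : R) (c : Fin q → R) : Matrix (Fin q) (Fin q) R :=
  Matrix.of fun i j => c (i - j) * t ^ ((((i - j : Fin q) : ℕ) + j) / q)

lemma sum_val_sub_perm (σ : Equiv.Perm (Fin q)) :
    ∑ j, ((σ j - j : Fin q) : ℕ) = q * ∑ j, (((σ j - j : Fin q) : ℕ) + j) / q := by
  have hmod (j : Fin q) : (((σ j - j : Fin q) : ℕ) + j) % q = σ j := by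
    rw [← Fin.val_add, sub_add_cancel]
  have hsplit := Finset.sum_congr rfl fun j (_ : j ∈ univ) =>
    (Nat.div_add_mod (((σ j - j : Fin q) : ℕ) + j) q).symm
  simp only [hmod, sum_add_distrib, ← mul_sum, Equiv.sum_comp σ (fun j : Fin q => (j : ℕ))]
    at hsplit
  omega

variable {Γ₀ : Type*} [LinearOrderedCommGroupWithZero Γ₀]

/-- The value `v (cᵢ uⁱ) ^ q` would have under an extension of `v` to `R[u]`, `u ^ q = t`. -/
def twistWeight (v : Valuation R Γ₀) (t : R) (c : Fin q → R) (i : Fin q) : Γ₀ :=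
  v (c i) ^ q * v t ^ (i : ℕ)

lemma val_prod_twistedCirculant_pow (v : Valuation R Γ₀) (t : R) (c : Fin q → R)
    (σ : Equiv.Perm (Fin q)) :
    v (∏ j, twistedCirculant t c (σ j) j) ^ q = ∏ j, twistWeight v t c (σ j - j) := by
  simp only [twistedCirculant, of_apply, map_prod, map_mul, map_pow, ← prod_pow, mul_pow,
    ← pow_mul, prod_mul_distrib, twistWeight, prod_pow_eq_pow_sum, sum_val_sub_perm σ,
    mul_comm q]

lemma val_prod_twistedCirculant_shift_pow (v : Valuation R Γ₀) (t : R) (c : Fin q → R)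
    (i₀ : Fin q) :
    v (∏ j, twistedCirculant t c (i₀ + j) j) ^ q = twistWeight v t c i₀ ^ q := by
  simpa using val_prod_twistedCirculant_pow v t c (Equiv.addLeft i₀)

variable {v : Valuation R Γ₀} {t : R} {c : Fin q → R}

lemma val_det_twistedCirculant_sub_lt {i₀ : Fin q} (hpos : twistWeight v t c i₀ ≠ 0)
    (hmax : ∀ i ≠ i₀, twistWeight v t c i < twistWeight v t c i₀) :
    v ((twistedCirculant t c).det -
        (Equiv.addLeft i₀).sign • ∏ j, twistedCirculant t c (i₀ + j) j) <
      v (∏ j, twistedCirculant t c (i₀ + j) j) := by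
  set σ₀ := Equiv.addLeft i₀
  have hshift := val_prod_twistedCirculant_shift_pow v t c i₀
  have hlt (σ : Equiv.Perm (Fin q)) (hσ : σ ≠ σ₀) :
      v (σ.sign • ∏ j, twistedCirculant t c (σ j) j) <
        v (∏ j, twistedCirculant t c (i₀ + j) j) := by
    obtain ⟨j₀, hj₀⟩ : ∃ j, σ j - j ≠ i₀ := by
      contrapose! hσ
      ext j
      simp [σ₀, ← hσ j]
    rw [v.map_units_int_smul]
    refine lt_of_pow_lt_pow_left₀ q zero_le ?_
    rw [val_prod_twistedCirculant_pow, hshift]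
    simpa using prod_lt_pow_card_of_forall_lt (g := fun j => σ j - j) hmax hj₀
  rw [det_apply, ← add_sum_erase _ _ (mem_univ σ₀)]
  simp only [σ₀, Equiv.coe_addLeft, add_sub_cancel_left]
  refine v.map_sum_lt ?_ fun σ hσ => hlt σ (ne_of_mem_erase hσ)
  exact fun h0 => pow_ne_zero q hpos (by rw [← hshift, h0, zero_pow (NeZero.ne q)])

end TwistedCirculant

section CosetsDistinct

open Finset

variable {F : Type*} [Field F] {Γ₀ : Type*} [LinearOrderedCommGroupWithZero Γ₀]
  {v : Valuation F Γ₀} {q : ℕ} {t : F}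

/-- Multiplicative form of: the cosets `qΓ + i v(t)`, `i < q`, are pairwise distinct. -/
def CosetsDistinct (v : Valuation F Γ₀) (q : ℕ) (t : F) : Prop :=
  ∀ i j : Fin q, i ≠ j → ∀ x y : F, x ≠ 0 → y ≠ 0 →
    v x ^ q * v t ^ (i : ℕ) ≠ v y ^ q * v t ^ (j : ℕ)

lemma CosetsDistinct.pow_ne (h : CosetsDistinct v q t) (hq : 1 < q) (ht : t ≠ 0) (x : F) :
    x ^ q ≠ t := by
  rintro rfl
  have hx : x ≠ 0 := by rintro rfl; exact ht (zero_pow (by omega))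
  exact h ⟨0, by omega⟩ ⟨1, hq⟩ (by simp [Fin.ext_iff]) x 1 hx one_ne_zero (by simp)

variable [NeZero q]

lemma CosetsDistinct.exists_forall_twistWeight_lt (h : CosetsDistinct v q t) (ht : t ≠ 0)
    {c : Fin q → F} (hc : c ≠ 0) :
    ∃ i₀, c i₀ ≠ 0 ∧ ∀ i ≠ i₀, twistWeight v t c i < twistWeight v t c i₀ := by
  have hW {i : Fin q} : twistWeight v t c i = 0 ↔ c i = 0 := by
    simp [twistWeight, ht, NeZero.ne q]
  obtain ⟨k, hk⟩ := Function.ne_iff.1 hc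
  obtain ⟨i₀, -, hmax⟩ := exists_max_image univ (twistWeight v t c) ⟨k, mem_univ k⟩
  have hi₀ : c i₀ ≠ 0 := fun h0 =>
    hk (hW.1 (le_antisymm (hW.2 h0 ▸ hmax k (mem_univ k)) zero_le))
  refine ⟨i₀, hi₀, fun i hi => (hmax i (mem_univ i)).lt_of_ne ?_⟩
  by_cases hci : c i = 0
  · rw [hW.2 hci]
    exact Ne.symm (mt hW.1 hi₀)
  · exact h i i₀ hi _ _ hci hi₀

theorem CosetsDistinct.val_det_twistedCirculant_eq_one (h : CosetsDistinct v q t) (ht : t ≠ 0)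
    {c : Fin q → F} (hdet : v (twistedCirculant t c).det = 1) :
    v (c 0) = 1 ∧ v ((twistedCirculant t c).det - c 0 ^ q) < 1 := by
  have hc : c ≠ 0 := by
    rintro rfl
    have hzero : twistedCirculant t (0 : Fin q → F) = 0 := by ext; simp [twistedCirculant]
    simp [hzero] at hdet
  obtain ⟨i₀, hci₀, hmax⟩ := h.exists_forall_twistWeight_lt ht hc
  have hpos : twistWeight v t c i₀ ≠ 0 := by simp [twistWeight, hci₀, ht]
  have hsub := val_det_twistedCirculant_sub_lt hpos hmax
  have hdom : v (∏ j, twistedCirculant t c (i₀ + j) j) = 1 := by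
    rw [← hdet, v.map_eq_of_sub_lt (hsub.trans_eq (v.map_units_int_smul _ _).symm),
      v.map_units_int_smul]
  have hW : twistWeight v t c i₀ = 1 := by
    rw [← pow_left_inj (NeZero.ne q), ← val_prod_twistedCirculant_shift_pow, hdom, one_pow]
  obtain rfl : i₀ = 0 := by
    by_contra hne
    exact h i₀ 0 hne (c i₀) 1 hci₀ one_ne_zero (by simpa [twistWeight] using hW)
  have hdiag : ∏ j, twistedCirculant t c (0 + j) j = c 0 ^ q := by
    simp [twistedCirculant, Nat.div_eq_of_lt]
  rw [hdiag, map_pow] at hdom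
  rw [hdiag, map_pow] at hsub
  exact ⟨(pow_eq_one_iff.1 hdom).resolve_right (NeZero.ne q), by simpa [hdom] using hsub⟩

end CosetsDistinct

section PureExtension

open Finset Polynomial

variable {F K : Type*} [Field F] [Field K] [Algebra F K] {q : ℕ} [NeZero q] {t : F} {u : K}

lemma exists_basis_pow_of_irreducible (hirr : Irreducible (X ^ q - C t))
    (hu : u ^ q = algebraMap F K t) (hadj : Algebra.adjoin F {u} = ⊤) :
    ∃ b : Module.Basis (Fin q) F K, ∀ i, b i = u ^ (i : ℕ) := by
  have hmonic := monic_X_pow_sub_C t (NeZero.ne q)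
  have hroot : aeval u (X ^ q - C t) = 0 := by simp [hu]
  have hmin : minpoly F u = X ^ q - C t :=
    (minpoly.eq_of_irreducible_of_monic hirr hroot hmonic).symm
  let pb := PowerBasis.ofAdjoinEqTop ⟨_, hmonic, hroot⟩ hadj
  have hdim : pb.dim = q := by
    rw [show pb.dim = (minpoly F u).natDegree from rfl, hmin, natDegree_X_pow_sub_C]
  exact ⟨pb.basis.reindex (finCongr hdim), fun i => by simp; rfl⟩

variable {b : Module.Basis (Fin q) F K}

lemma Module.Basis.repr_pow_of_eq_pow (hb : ∀ i, b i = u ^ (i : ℕ))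
    (hu : u ^ q = algebraMap F K t) (n : ℕ) :
    b.repr (u ^ n) = Finsupp.single (Fin.ofNat q n) (t ^ (n / q)) := by
  have hun : u ^ n = t ^ (n / q) • b (Fin.ofNat q n) := by
    rw [hb, Fin.val_ofNat, Algebra.smul_def, map_pow, ← hu, ← pow_mul, ← pow_add,
      Nat.div_add_mod]
  rw [hun, map_smul, b.repr_self, Finsupp.smul_single, smul_eq_mul, mul_one]

lemma leftMulMatrix_eq_twistedCirculant (hb : ∀ i, b i = u ^ (i : ℕ))
    (hu : u ^ q = algebraMap F K t) (a : K) :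
    Algebra.leftMulMatrix b a = twistedCirculant t (b.repr a) := by
  ext i j
  have hwrap (k : Fin q) : Fin.ofNat q (k + j) = k + j := Fin.ext (by simp [Fin.val_add])
  conv_lhs => rw [Algebra.leftMulMatrix_eq_repr_mul, ← b.sum_repr a]
  simp only [sum_mul, map_sum, Finsupp.finsetSum_apply, smul_mul_assoc, map_smul, hb, ← pow_add,
    b.repr_pow_of_eq_pow hb hu, Finsupp.smul_apply, Finsupp.single_apply, hwrap,
    ← eq_sub_iff_add_eq, smul_eq_mul]
  simp [twistedCirculant]

end PureExtension

theorem residue_image_norm_eq_pow_q_general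
    (F : Type*) [Field F] (Γ₀ : Type*) [LinearOrderedCommGroupWithZero Γ₀]
    (v : Valuation F Γ₀)
    (q : ℕ) (hq : q.Prime) (t : F) (ht : t ≠ 0)
    (hcosets : ∀ i j : Fin q, i ≠ j → ∀ x y : F, x ≠ 0 → y ≠ 0 →
      v x ^ q * v t ^ (i : ℕ) ≠ v y ^ q * v t ^ (j : ℕ))
    (K : Type*) [Field K] [Algebra F K] (u : K)
    (hu : u ^ q = algebraMap F K t)
    (hadj : Algebra.adjoin F {u} = ⊤) :
    (Set.range fun a : K => residueExt v (Algebra.norm F a)) \ {0}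
      = {y : IsLocalRing.ResidueField v.valuationSubring | ∃ z, z ≠ 0 ∧ z ^ q = y} := by
  have : NeZero q := ⟨hq.ne_zero⟩
  obtain ⟨b, hb⟩ := exists_basis_pow_of_irreducible
    (X_pow_sub_C_irreducible_of_prime hq (CosetsDistinct.pow_ne hcosets hq.one_lt ht)) hu hadj
  have hnorm (a : K) : Algebra.norm F a = (twistedCirculant t (b.repr a)).det := by
    rw [Algebra.norm_eq_matrix_det b, leftMulMatrix_eq_twistedCirculant hb hu]
  ext y
  constructor
  · rintro ⟨⟨a, rfl⟩, hy⟩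
    dsimp only at hy ⊢
    rw [hnorm] at hy ⊢
    obtain ⟨hc0, hlt⟩ :=
      CosetsDistinct.val_det_twistedCirculant_eq_one hcosets ht (residueExt_ne_zero_iff.1 hy)
    refine ⟨residueExt v (b.repr a 0), residueExt_ne_zero_iff.2 hc0, ?_⟩
    rw [← residueExt_pow hc0.le, residueExt_eq_of_val_sub_lt_one (by simp [hc0]) hlt]
  · rintro ⟨z, hz, rfl⟩
    obtain ⟨x, hx, rfl⟩ := exists_residueExt_eq z
    refine ⟨⟨algebraMap F K x, ?_⟩, pow_ne_zero q hz⟩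
    dsimp only
    rw [Algebra.norm_algebraMap, Module.finrank_eq_card_basis b, Fintype.card_fin,
      residueExt_pow hx]

/-- Let `(F,v)` be a valued field of equal characteristic with value group `Γ`, `q` a prime,
and `t ∈ F` such that the cosets `qΓ, qΓ + v(t), …, qΓ + (q−1)v(t)` are pairwise distinct
in `Γ` (stated multiplicatively). Assume `F` contains a primitive `q`-th root of unity and
let `K = F(u)` with `u^q = t` (a cyclic extension of degree `q`). Then the image under the
residue map of the set of norms of `K/F`, with `0` removed, is exactly the set of `q`-th
powers of nonzero elements of the residue field. -/
theorem residue_image_norm_eq_pow_q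
    (F : Type*) [Field F] (Γ₀ : Type*) [LinearOrderedCommGroupWithZero Γ₀]
    (v : Valuation F Γ₀)
    (hchar : ringChar F = ringChar (IsLocalRing.ResidueField v.valuationSubring))
    (q : ℕ) (hq : q.Prime) (t : F) (ht : t ≠ 0)
    (hcosets : ∀ i j : Fin q, i ≠ j → ∀ x y : F, x ≠ 0 → y ≠ 0 →
      v x ^ q * v t ^ (i : ℕ) ≠ v y ^ q * v t ^ (j : ℕ))
    (hroot : ∃ ζ : F, IsPrimitiveRoot ζ q)
    (K : Type*) [Field K] [Algebra F K] (u : K)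
    (hu : u ^ q = algebraMap F K t)
    (hadj : Algebra.adjoin F {u} = ⊤) :
    (Set.range fun a : K => residueExt v (Algebra.norm F a)) \ {0}
      = {y : IsLocalRing.ResidueField v.valuationSubring | ∃ z, z ≠ 0 ∧ z ^ q = y} :=
  residue_image_norm_eq_pow_q_general F Γ₀ v q hq t ht hcosets K u hu hadj
end

section
/- Let q be a prime number and identify the index set {0, …, q−1} with the finite field 𝔽_q. For c ∈ 𝔽_q^q, let An(c) be the set of anagrams of c, i.e. all tuples d ∈ 𝔽_q^q such that d_i = c_{σ(i)} for some permutation σ of 𝔽_q, let Σ̃(d) = Σ_{i ∈ 𝔽_q} i·d_i ∈ 𝔽_q, and for λ ∈ 𝔽_q let An^λ(c) = { d ∈ An(c) : Σ̃(d) = λ }. Then for all nonzero λ, μ ∈ 𝔽_q^×, the sets An^λ(c) and An^μ(c) have the same cardinality. -/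
/-- The set of anagrams of a tuple `c ∈ 𝔽_q^q` (indexed by `𝔽_q = ZMod q`): all tuples
obtained from `c` by permuting the entries. -/
def anagrams (q : ℕ) [NeZero q] (c : ZMod q → ZMod q) : Finset (ZMod q → ZMod q) :=
  Finset.univ.filter (fun d => ∃ σ : Equiv.Perm (ZMod q), d = c ∘ σ)

/-- `An^λ(c)`: the anagrams `d` of `c` with weighted sum `Σ̃(d) = Σ_{i ∈ 𝔽_q} i·d_i = λ`. -/
def anagramsLevel (q : ℕ) [NeZero q] (c : ZMod q → ZMod q) (lam : ZMod q) :
    Finset (ZMod q → ZMod q) :=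
  (anagrams q c).filter (fun d => ∑ i : ZMod q, i * d i = lam)

/-!
Multiplying the indices by a unit `u` permutes the positions of a tuple, so `d ↦ d ∘ (u * ·)`
maps anagrams of `c` to anagrams of `c`, and it rescales the weighted sum `Σ̃` by `u⁻¹`.
It therefore embeds `An^λ(c)` into `An^{u⁻¹λ}(c)`, and the embedding for `u⁻¹` goes back, so
the two levels have equal size; over `𝔽_q` any two nonzero levels differ by a unit factor.
-/

theorem sum_mul_comp_mulLeft {R : Type*} [CommRing R] [Fintype R] (u : Rˣ) (d : R → R) :
    ∑ i, i * d (u * i) = (↑u⁻¹ : R) * ∑ i, i * d i := by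
  rw [Finset.mul_sum, ← Equiv.sum_comp (Units.mulLeft u) (fun j => ↑u⁻¹ * (j * d j))]
  simp only [Units.mulLeft_apply, ← mul_assoc, Units.inv_mul, one_mul]

theorem comp_mem_anagrams {q : ℕ} [NeZero q] {c d : ZMod q → ZMod q}
    (hd : d ∈ anagrams q c) (τ : Equiv.Perm (ZMod q)) : d ∘ τ ∈ anagrams q c := by
  simp only [anagrams, Finset.mem_filter, Finset.mem_univ, true_and] at hd ⊢
  obtain ⟨σ, rfl⟩ := hd
  exact ⟨τ.trans σ, rfl⟩

theorem comp_mulLeft_mem_anagramsLevel {q : ℕ} [NeZero q] {c d : ZMod q → ZMod q}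
    {lam : ZMod q} (u : (ZMod q)ˣ) (hd : d ∈ anagramsLevel q c lam) :
    d ∘ Units.mulLeft u ∈ anagramsLevel q c (↑u⁻¹ * lam) := by
  rw [anagramsLevel, Finset.mem_filter] at hd ⊢
  refine ⟨comp_mem_anagrams hd.1 _, ?_⟩
  simpa only [Function.comp_apply, Units.mulLeft_apply, ← hd.2] using sum_mul_comp_mulLeft u d

theorem card_anagramsLevel_le_inv_mul {q : ℕ} [NeZero q] (c : ZMod q → ZMod q) (lam : ZMod q)
    (u : (ZMod q)ˣ) :
    (anagramsLevel q c lam).card ≤ (anagramsLevel q c (↑u⁻¹ * lam)).card :=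
  Finset.card_le_card_of_injOn (· ∘ Units.mulLeft u)
    (fun _ hd => comp_mulLeft_mem_anagramsLevel u hd)
    ((Units.mulLeft u).surjective.injective_comp_right.injOn)

theorem card_anagramsLevel_unit_mul {q : ℕ} [NeZero q] (c : ZMod q → ZMod q) (lam : ZMod q)
    (u : (ZMod q)ˣ) :
    (anagramsLevel q c (u * lam)).card = (anagramsLevel q c lam).card := by
  apply le_antisymm
  · simpa only [Units.inv_mul_cancel_left] using card_anagramsLevel_le_inv_mul c (u * lam) u
  · simpa only [inv_inv] using card_anagramsLevel_le_inv_mul c lam u⁻¹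

/-- For a prime `q`, a tuple `c ∈ 𝔽_q^q` and nonzero `λ, μ ∈ 𝔽_q`, the sets `An^λ(c)` and
`An^μ(c)` have the same cardinality. -/
theorem anagramsLevel_card_eq_of_ne_zero (q : ℕ) [Fact q.Prime]
    (c : ZMod q → ZMod q) (lam mu : ZMod q) (hlam : lam ≠ 0) (hmu : mu ≠ 0) :
    (anagramsLevel q c lam).card = (anagramsLevel q c mu).card := by
  have hu : mu * lam⁻¹ ≠ 0 := mul_ne_zero hmu (inv_ne_zero hlam)
  have hmu_eq : ↑(Units.mk0 _ hu) * lam = mu := by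
    rw [Units.val_mk0, inv_mul_cancel_right₀ hlam]
  rw [← hmu_eq, card_anagramsLevel_unit_mul]
end

section
/- Let q be a prime number and identify the index set {0, …, q−1} with the finite field 𝔽_q. For c ∈ 𝔽_q^q, let An(c) be the set of anagrams of c, let Σ̃(d) = Σ_{i ∈ 𝔽_q} i·d_i ∈ 𝔽_q, and An^λ(c) = { d ∈ An(c) : Σ̃(d) = λ }. Suppose c = (c_0, …, c_{q−1}) has at least two unequal entries (there exist i ≠ j with c_i ≠ c_j). Then |An^0(c)| = |An^1(c)| if and only if c_0 + c_1 + ⋯ + c_{q−1} ≠ 0 in 𝔽_q. -/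
/-! Write `s = ∑ cᵢ`. Precomposing an anagram with `i ↦ i + t` lowers its weighted sum by `t s`,
and precomposing with `i ↦ a i` multiplies it by `a⁻¹`. If `s ≠ 0`, translation by `-s⁻¹` is a
bijection `An⁰(c) → An¹(c)`. If `s = 0`, translation by `1` preserves every level and, `c` not
being constant, has no fixed point there; as it has order `q`, `q ∣ |Anᵏ(c)|`. If moreover
`|An⁰(c)| = |An¹(c)|`, scaling makes all `q` levels equally large, so `q² ∣ |An(c)|`. But `An(c)`
is an orbit of `Perm 𝔽_q`, so `|An(c)|` divides `q!`, which `q²` does not. -/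

open Equiv Finset MulAction

theorem sum_mul_comp_addRight {R : Type*} [CommRing R] [Fintype R] (d : R → R) (t : R) :
    ∑ i, i * d (i + t) = ∑ i, i * d i - t * ∑ i, d i := by
  rw [mul_sum, ← sum_sub_distrib]
  exact Fintype.sum_equiv (Equiv.addRight t) _ _ fun i => by simp only [coe_addRight]; ring

theorem sum_mul_comp_mulLeft_s6 {F : Type*} [Field F] [Fintype F] (d : F → F) {a : F} (ha : a ≠ 0) :
    ∑ i, i * d (a * i) = a⁻¹ * ∑ i, i * d i := by
  rw [mul_sum]
  exact Fintype.sum_equiv (Equiv.mulLeft₀ a ha) _ _ fun i => by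
    simp only [mulLeft₀_apply, ← mul_assoc, inv_mul_cancel_left₀ ha]

theorem ZMod.apply_eq_of_periodic_one {n : ℕ} {R : Type*} {d : ZMod n → R}
    (hd : Function.Periodic d 1) (i j : ZMod n) : d i = d j := by
  have h : ∀ i : ZMod n, d i = d 0 := fun i => by
    simpa using hd.int_mul (i.cast : ℤ) 0
  rw [h i, h j]

theorem Nat.Prime.not_sq_dvd_factorial {p : ℕ} (hp : p.Prime) : ¬ p ^ 2 ∣ p.factorial := by
  obtain ⟨m, rfl⟩ : ∃ m, p = m + 1 := ⟨p - 1, by have := hp.two_le; omega⟩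
  rw [Nat.factorial_succ, pow_two, Nat.mul_dvd_mul_iff_left m.succ_pos, hp.dvd_factorial]
  omega

section Anagrams

variable {q : ℕ} [NeZero q] {c d : ZMod q → ZMod q}

theorem mem_anagrams : d ∈ anagrams q c ↔ ∃ σ : Perm (ZMod q), d = c ∘ σ := by
  simp [anagrams]

theorem comp_mem_anagrams_iff (π : Perm (ZMod q)) : d ∘ π ∈ anagrams q c ↔ d ∈ anagrams q c := by
  refine ⟨fun h => ?_, fun h => ?_⟩
  · obtain ⟨σ, hσ⟩ := mem_anagrams.1 h
    exact mem_anagrams.2 ⟨π.symm.trans σ, funext fun i => by simpa using congrFun hσ (π.symm i)⟩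
  · obtain ⟨σ, rfl⟩ := mem_anagrams.1 h
    exact mem_anagrams.2 ⟨π.trans σ, rfl⟩

theorem sum_eq_of_mem_anagrams (hd : d ∈ anagrams q c) : ∑ i, d i = ∑ i, c i := by
  obtain ⟨σ, rfl⟩ := mem_anagrams.1 hd
  exact Equiv.sum_comp σ c

theorem not_periodic_one_of_mem_anagrams (hc : ∃ i j, c i ≠ c j) (hd : d ∈ anagrams q c) :
    ¬ Function.Periodic d 1 := by
  obtain ⟨σ, rfl⟩ := mem_anagrams.1 hd
  obtain ⟨i, j, hij⟩ := hc
  exact fun hp => hij (by simpa using ZMod.apply_eq_of_periodic_one hp (σ.symm i) (σ.symm j))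

theorem coe_anagrams_eq_orbit (c : ZMod q → ZMod q) :
    (anagrams q c : Set (ZMod q → ZMod q)) = orbit (Perm (ZMod q))ᵈᵐᵃ c := by
  ext d
  simp only [mem_coe, mem_anagrams, mem_orbit_iff]
  exact ⟨fun ⟨σ, hσ⟩ => ⟨DomMulAct.mk σ, hσ.symm⟩, fun ⟨σ, hσ⟩ => ⟨DomMulAct.mk.symm σ, hσ.symm⟩⟩

theorem card_anagrams_dvd_factorial (c : ZMod q → ZMod q) : #(anagrams q c) ∣ q.factorial := by
  have h := (stabilizer (Perm (ZMod q))ᵈᵐᵃ c).index_dvd_card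
  rwa [index_stabilizer, ← coe_anagrams_eq_orbit, Set.ncard_coe_finset,
    Nat.card_congr DomMulAct.mk.symm, Nat.card_perm, Nat.card_zmod] at h

theorem mem_anagramsLevel {lam : ZMod q} :
    d ∈ anagramsLevel q c lam ↔ d ∈ anagrams q c ∧ ∑ i, i * d i = lam :=
  mem_filter

theorem card_anagrams_eq_sum_card_anagramsLevel (c : ZMod q → ZMod q) :
    #(anagrams q c) = ∑ lam, #(anagramsLevel q c lam) :=
  card_eq_sum_card_fiberwise fun _ _ => mem_univ _

theorem card_anagramsLevel_eq_of_perm (π : Perm (ZMod q)) {μ ν : ZMod q}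
    (h : ∀ d ∈ anagrams q c, ∑ i, i * d (π i) = ν ↔ ∑ i, i * d i = μ) :
    #(anagramsLevel q c μ) = #(anagramsLevel q c ν) := by
  refine card_nbij' (· ∘ π) (· ∘ π.symm) (fun d hd => ?_) (fun d hd => ?_)
    (fun d _ => by simp [Function.comp_assoc]) (fun d _ => by simp [Function.comp_assoc])
  · obtain ⟨hd, hμ⟩ := mem_anagramsLevel.1 hd
    exact mem_anagramsLevel.2 ⟨(comp_mem_anagrams_iff π).2 hd, (h d hd).2 hμ⟩
  · obtain ⟨hd, hν⟩ := mem_anagramsLevel.1 hd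
    have hd' := (comp_mem_anagrams_iff π.symm).2 hd
    exact mem_anagramsLevel.2 ⟨hd', (h _ hd').1 (by simpa using hν)⟩

end Anagrams

section Prime

variable {q : ℕ} [Fact q.Prime] {c : ZMod q → ZMod q}

theorem card_anagramsLevel_eq_of_sum_ne_zero (hs : ∑ i, c i ≠ 0) (μ ν : ZMod q) :
    #(anagramsLevel q c μ) = #(anagramsLevel q c ν) := by
  refine card_anagramsLevel_eq_of_perm (Equiv.addRight ((μ - ν) / ∑ i, c i)) fun d hd => ?_
  rw [coe_addRight, sum_mul_comp_addRight, sum_eq_of_mem_anagrams hd, div_mul_cancel₀ _ hs]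
  constructor <;> intro h <;> linear_combination h

theorem card_anagramsLevel_eq_of_ne_zero {μ ν : ZMod q} (hμ : μ ≠ 0) (hν : ν ≠ 0) :
    #(anagramsLevel q c μ) = #(anagramsLevel q c ν) := by
  refine card_anagramsLevel_eq_of_perm (Equiv.mulLeft₀ (μ / ν) (div_ne_zero hμ hν)) fun d _ => ?_
  rw [Equiv.mulLeft₀_apply, sum_mul_comp_mulLeft_s6 _ (div_ne_zero hμ hν), inv_div, div_mul_eq_mul_div,
    div_eq_iff hμ, mul_right_inj' hν]

theorem prime_dvd_card_anagramsLevel (hc : ∃ i j, c i ≠ c j) (hs : ∑ i, c i = 0) (lam : ZMod q) :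
    q ∣ #(anagramsLevel q c lam) := by
  classical
  -- `shift d = d ∘ (· + 1)`; defining it through `DomMulAct` turns `shift ^ q = 1` into a
  -- computation in `Perm (ZMod q)`.
  let shift := toPermHom (Perm (ZMod q))ᵈᵐᵃ (ZMod q → ZMod q) (DomMulAct.mk (Equiv.addRight 1))
  have shift_mem : ∀ d, shift d ∈ anagramsLevel q c lam ↔ d ∈ anagramsLevel q c lam := fun d => by
    rw [show shift d = d ∘ Equiv.addRight 1 from rfl, mem_anagramsLevel, mem_anagramsLevel,
      comp_mem_anagrams_iff]
    refine and_congr_right fun hd => ?_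
    rw [Function.comp_def, coe_addRight, sum_mul_comp_addRight, sum_eq_of_mem_anagrams hd, hs,
      mul_zero, sub_zero]
  have shift_pow : shift ^ q = 1 := by
    rw [← map_pow, ← DomMulAct.mk_pow, nsmul_addRight, nsmul_one, ZMod.natCast_self,
      addRight_zero, DomMulAct.mk_one, map_one]
  by_contra hndvd
  obtain ⟨⟨d, hd⟩, hfix⟩ :=
    Perm.exists_fixed_point_of_prime (n := 1) (σ := shift.subtypePerm shift_mem)
      (by rwa [Fintype.card_coe])
      (by simp only [pow_one, Perm.subtypePerm_pow, shift_pow]; rfl)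
  exact not_periodic_one_of_mem_anagrams hc (mem_anagramsLevel.1 hd).1
    (congrFun (congrArg Subtype.val hfix))

end Prime

/-- For a prime `q` and a tuple `c ∈ 𝔽_q^q` with at least two unequal entries,
`|An^0(c)| = |An^1(c)|` if and only if `c_0 + ⋯ + c_{q−1} ≠ 0` in `𝔽_q`. -/
theorem anagramsLevel_card_zero_eq_one_iff (q : ℕ) [Fact q.Prime]
    (c : ZMod q → ZMod q) (hc : ∃ i j : ZMod q, i ≠ j ∧ c i ≠ c j) :
    (anagramsLevel q c 0).card = (anagramsLevel q c 1).card ↔ (∑ i : ZMod q, c i) ≠ 0 := by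
  refine ⟨fun hcard hs => ?_, fun hs => card_anagramsLevel_eq_of_sum_ne_zero hs 0 1⟩
  have hlevel (lam : ZMod q) : #(anagramsLevel q c lam) = #(anagramsLevel q c 0) := by
    rcases eq_or_ne lam 0 with rfl | hlam
    · rfl
    · rw [hcard, card_anagramsLevel_eq_of_ne_zero hlam one_ne_zero]
  have htotal : #(anagrams q c) = q * #(anagramsLevel q c 0) := by
    rw [card_anagrams_eq_sum_card_anagramsLevel, sum_congr rfl fun lam _ => hlevel lam, sum_const,
      card_univ, ZMod.card, smul_eq_mul]
  obtain ⟨k, hk⟩ := prime_dvd_card_anagramsLevel (hc.imp fun _ ⟨j, _, hij⟩ => ⟨j, hij⟩) hs 0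
  have hsq : q ^ 2 ∣ #(anagrams q c) := ⟨k, by rw [htotal, hk]; ring⟩
  exact Nat.Prime.not_sq_dvd_factorial Fact.out (hsq.trans (card_anagrams_dvd_factorial c))
end

section
/- Let (F,v) be a valued field with value group Γ, let q be a prime number, and let t ∈ F^× be such that the q cosets qΓ, qΓ + v(t), …, qΓ + (q−1)v(t) are pairwise distinct in Γ. Then the polynomial X^q − t is irreducible over F. -/
open Polynomial

theorem irreducible_X_pow_sub_C_of_valuation_ne_pow {F Γ₀ : Type*} [Field F]
    [LinearOrderedCommMonoidWithZero Γ₀] (v : Valuation F Γ₀) {q : ℕ} (hq : q.Prime) {t : F}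
    (h : ∀ x : F, v x ^ q ≠ v t) : Irreducible (X ^ q - C t : F[X]) :=
  X_pow_sub_C_irreducible_of_prime hq fun b hb => h b (hb ▸ (map_pow v b q).symm)

/-- The coset condition is written multiplicatively: `v x ^ q * v t ^ i` for `x ≠ 0` ranges over
the coset `qΓ + i·v(t)`. -/
theorem irreducible_X_pow_sub_C_of_distinct_cosets
    (F : Type*) [Field F] (Γ₀ : Type*) [LinearOrderedCommGroupWithZero Γ₀]
    (v : Valuation F Γ₀) (q : ℕ) (hq : q.Prime) (t : F) (ht : t ≠ 0)
    (hcosets : ∀ i j : Fin q, i ≠ j → ∀ x y : F, x ≠ 0 → y ≠ 0 →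
      v x ^ q * v t ^ (i : ℕ) ≠ v y ^ q * v t ^ (j : ℕ)) :
    Irreducible (Polynomial.X ^ q - Polynomial.C t) := by
  refine irreducible_X_pow_sub_C_of_valuation_ne_pow v hq fun x => ?_
  rcases eq_or_ne x 0 with rfl | hx
  · simpa [hq.ne_zero] using ((v.ne_zero_iff).2 ht).symm
  simpa using hcosets ⟨0, hq.pos⟩ ⟨1, hq.one_lt⟩ (by simp [Fin.ext_iff]) x 1 hx one_ne_zero
end

section
/- Let q and p be prime numbers such that q divides p − 1. Then there exists a division ring D which is an algebra over the field 𝔽_p((X)) of formal Laurent series over the field with p elements, whose center is exactly 𝔽_p((X)), and whose dimension over 𝔽_p((X)) is q². -/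
/-- A witness that there is a division algebra over the field `F` which is central over `F`
(its center is exactly the image of `F`) and of dimension `n` over `F`. -/
structure CentralDivisionAlgebraOver (F : Type) [Field F] (n : ℕ) where
  /-- The underlying type of the division algebra. -/
  carrier : Type
  /-- The division ring structure. -/
  [instDivisionRing : DivisionRing carrier]
  /-- The `F`-algebra structure. -/
  [instAlgebra : Algebra F carrier]
  /-- The center of the algebra is exactly (the image of) `F`. -/
  center_eq : Subalgebra.center F carrier = ⊥
  /-- The dimension over `F` is `n`. -/
  finrank_eq : Module.finrank F carrier = n

/-!
Let `E / F` be a cyclic Galois extension of degree `n` with generator `σ` (here `F = 𝔽_p` and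
`E = 𝔽_{p ^ q}`). The cyclic algebra `D = (E((X)) / F((X)), σ, X)` is
`⊕_{j < n} E((X)) u ^ j` with `u a = σ(a) u` and `u ^ n = X`, of dimension `n ^ 2` over `F((X))`.

Give `u` order `1`, so `X` has order `n`. Since `n * ord + j` determines `j` for `0 ≤ j < n`,
the terms of lowest order in two nonzero elements are unique, and their product is the unique
term of lowest order in the product. So `D` is a domain, hence a division ring, being
finite-dimensional over a field. An element commuting with `E` lies in `E((X))`, since no
`σ ^ j` with `0 < j < n` is the identity; if it also commutes with `u`, its coefficients are fixed
by `σ`, hence lie in `F`. So the center of `D` is `F((X))`.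
-/

open HahnSeries

namespace HahnSeries

variable {Γ R S G : Type*}

section Map

variable [Zero R] [Zero S] [FunLike G R S] [ZeroHomClass G R S]

protected theorem map_eq_zero_iff [PartialOrder Γ] {f : G} (hf : Function.Injective f)
    {x : HahnSeries Γ R} : x.map f = 0 ↔ x = 0 := by
  simp only [HahnSeries.ext_iff, funext_iff, map_coeff, coeff_zero,
    _root_.map_eq_zero_iff f hf]

theorem exists_map_eq_of_coeff_mem_range [PartialOrder Γ] {f : G} (hf : Function.Injective f)
    (x : HahnSeries Γ S) (hx : ∀ g, x.coeff g ∈ Set.range f) :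
    ∃ y : HahnSeries Γ R, y.map f = x := by
  choose c hc using hx
  refine ⟨⟨c, x.isPWO_support.mono fun g hg hxg => hg (hf ?_)⟩, HahnSeries.ext (funext hc)⟩
  rw [hc, hxg, map_zero]

theorem order_map_of_injective [LinearOrder Γ] [Zero Γ] {f : G} (hf : Function.Injective f)
    (x : HahnSeries Γ R) : (x.map f).order = x.order := by
  rcases eq_or_ne x 0 with rfl | hx
  · rw [(HahnSeries.map_eq_zero_iff hf).mpr rfl, order_zero, order_zero]
  refine le_antisymm (order_le_of_coeff_ne_zero ?_) (order_le_of_coeff_ne_zero ?_)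
  · simpa [_root_.map_eq_zero_iff f hf] using coeff_order_eq_zero.not.mpr hx
  · have hfx : x.map f ≠ 0 := (HahnSeries.map_eq_zero_iff hf).not.mpr hx
    exact fun h => coeff_order_eq_zero.not.mpr hfx (by simp [h])

end Map

variable [AddCommMonoid Γ] [PartialOrder Γ] [IsOrderedCancelAddMonoid Γ]

noncomputable def mapRingHom [Semiring R] [Semiring S] (f : R →+* S) :
    HahnSeries Γ R →+* HahnSeries Γ S where
  toFun x := x.map f
  map_one' := HahnSeries.map_one f.toMonoidWithZeroHom
  map_mul' _ _ := HahnSeries.map_mul (f : R →ₙ+* S)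
  map_zero' := HahnSeries.map_zero f.toZeroHom
  map_add' _ _ := HahnSeries.map_add f.toAddMonoidHom

@[simp]
theorem mapRingHom_apply [Semiring R] [Semiring S] (f : R →+* S) (x : HahnSeries Γ R) :
    mapRingHom f x = x.map f :=
  rfl

variable {F E ι : Type*} [CommRing F] [Ring E] [Algebra F E] [Fintype ι]

theorem coeff_sum_map_algebraMap_mul_single (b : ι → E) (v : ι → HahnSeries Γ F) (g : Γ) :
    (∑ i, (v i).map (algebraMap F E) * single 0 (b i)).coeff g =
      ∑ i, (v i).coeff g • b i := by
  simp [coeff_sum, coeff_mul_single_zero, Algebra.smul_def]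

theorem bijective_sum_map_algebraMap_mul_single (b : Module.Basis ι F E) :
    Function.Bijective fun v : ι → HahnSeries Γ F =>
      ∑ i, (v i).map (algebraMap F E) * single 0 (b i) := by
  refine ⟨fun v w h => funext fun i => HahnSeries.ext (funext fun g => ?_), fun x => ?_⟩
  · have := congrArg (coeff · g) h
    simp only [coeff_sum_map_algebraMap_mul_single, ← b.equivFun_symm_apply] at this
    exact congrFun (b.equivFun.symm.injective this) i
  · refine ⟨fun i => x.map (b.coord i), HahnSeries.ext (funext fun g => ?_)⟩
    rw [coeff_sum_map_algebraMap_mul_single]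
    exact b.sum_repr (x.coeff g)

end HahnSeries

namespace ZMod

variable {n : ℕ}

def addCarry (j m : ZMod n) : ℕ := (j.val + m.val) / n

variable [NeZero n]

theorem val_add_val_eq (j m : ZMod n) : j.val + m.val = n * addCarry j m + (j + m).val := by
  rw [addCarry, ZMod.val_add, Nat.div_add_mod]

@[simp]
theorem addCarry_zero_left (m : ZMod n) : addCarry 0 m = 0 := by
  simp [addCarry, Nat.div_eq_of_lt m.val_lt]

@[simp]
theorem addCarry_zero_right (m : ZMod n) : addCarry m 0 = 0 := by
  simp [addCarry, Nat.div_eq_of_lt m.val_lt]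

theorem addCarry_add_addCarry (j m k : ZMod n) :
    addCarry j m + addCarry (j + m) k = addCarry m k + addCarry j (m + k) := by
  have h₁ := val_add_val_eq j m
  have h₂ := val_add_val_eq (j + m) k
  have h₃ := val_add_val_eq m k
  have h₄ := val_add_val_eq j (m + k)
  rw [← add_assoc] at h₄
  refine Nat.eq_of_mul_eq_mul_left (Nat.pos_of_neZero n) ?_
  linarith

theorem eq_of_mul_add_val_eq {a b : ℤ} {j m : ZMod n}
    (h : (n : ℤ) * a + j.val = n * b + m.val) : j = m := by
  have hmod := congrArg (· % (n : ℤ)) h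
  simp only [Int.mul_add_emod_self_left] at hmod
  rw [Int.emod_eq_of_lt (by positivity) (by exact_mod_cast j.val_lt),
    Int.emod_eq_of_lt (by positivity) (by exact_mod_cast m.val_lt)] at hmod
  exact ZMod.val_injective n (by exact_mod_cast hmod)

end ZMod

section CyclicAlgebra

variable {F E : Type*} [Field F] [Field E] [Algebra F E]

/-- The cyclic algebra `(E((X)) / F((X)), σ, X)`: `d` stands for `∑ j, d j * u ^ j.val`, where
`u * a = σ a * u` for `a : E((X))` and `u ^ orderOf σ = X`. -/
def CyclicLaurentAlgebra (σ : E ≃ₐ[F] E) : Type _ := ZMod (orderOf σ) → LaurentSeries E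

namespace CyclicLaurentAlgebra

open ZMod

section Twist

variable (σ : E ≃ₐ[F] E)

noncomputable def twist (j : ℕ) : LaurentSeries E →+* LaurentSeries E :=
  mapRingHom ((σ ^ j : E ≃ₐ[F] E) : E →+* E)

theorem coeff_twist (j : ℕ) (x : LaurentSeries E) (g : ℤ) :
    (twist σ j x).coeff g = (σ ^ j) (x.coeff g) :=
  rfl

@[simp]
theorem twist_zero (x : LaurentSeries E) : twist σ 0 x = x := by
  ext; simp [coeff_twist]

theorem twist_twist (i j : ℕ) (x : LaurentSeries E) :
    twist σ i (twist σ j x) = twist σ (i + j) x := by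
  ext
  rw [coeff_twist, coeff_twist, coeff_twist, _root_.pow_add, AlgEquiv.mul_apply]

theorem twist_mod_orderOf (j : ℕ) : twist σ (j % orderOf σ) = twist σ j := by
  rw [twist, twist, pow_mod_orderOf]

theorem twist_val_one (x : LaurentSeries E) :
    twist σ (1 : ZMod (orderOf σ)).val x = twist σ 1 x := by
  rw [val_one_eq_one_mod, twist_mod_orderOf]

theorem twist_twist_val [NeZero (orderOf σ)] (j m : ZMod (orderOf σ)) (x : LaurentSeries E) :
    twist σ j.val (twist σ m.val x) = twist σ (j + m).val x := by
  rw [twist_twist, ZMod.val_add, twist_mod_orderOf]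

@[simp]
theorem twist_single (j : ℕ) (g : ℤ) (r : E) :
    twist σ j (single g r) = single g ((σ ^ j) r) := by
  ext h
  rw [coeff_twist, coeff_single, coeff_single]
  split_ifs <;> simp

theorem twist_map_algebraMap (j : ℕ) (f : LaurentSeries F) :
    twist σ j (f.map (algebraMap F E)) = f.map (algebraMap F E) := by
  ext; simp [coeff_twist]

theorem twist_eq_zero_iff (j : ℕ) {x : LaurentSeries E} : twist σ j x = 0 ↔ x = 0 :=
  HahnSeries.map_eq_zero_iff (σ ^ j).injective

theorem order_twist (j : ℕ) (x : LaurentSeries E) : (twist σ j x).order = x.order :=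
  order_map_of_injective (σ ^ j).injective x

theorem mul_twist_mul_single_ne_zero {a b : LaurentSeries E} (ha : a ≠ 0) (hb : b ≠ 0)
    (j c : ℕ) : a * twist σ j b * single (c : ℤ) 1 ≠ 0 :=
  mul_ne_zero (mul_ne_zero ha ((twist_eq_zero_iff σ j).not.mpr hb)) (single_ne_zero one_ne_zero)

end Twist

section Ring

variable (σ : E ≃ₐ[F] E)

noncomputable instance : AddCommGroup (CyclicLaurentAlgebra σ) := Pi.addCommGroup

@[simp]
theorem add_apply (d e : CyclicLaurentAlgebra σ) (k : ZMod (orderOf σ)) :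
    (d + e) k = d k + e k :=
  rfl

@[simp]
theorem zero_apply (k : ZMod (orderOf σ)) : (0 : CyclicLaurentAlgebra σ) k = 0 := rfl

theorem sum_apply {α : Type*} (s : Finset α) (d : α → CyclicLaurentAlgebra σ)
    (k : ZMod (orderOf σ)) : (∑ i ∈ s, d i) k = ∑ i ∈ s, d i k :=
  Finset.sum_apply k s d

noncomputable def monomial (j : ZMod (orderOf σ)) (a : LaurentSeries E) :
    CyclicLaurentAlgebra σ :=
  Pi.single j a

theorem monomial_apply (j : ZMod (orderOf σ)) (a : LaurentSeries E) (k : ZMod (orderOf σ)) :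
    monomial σ j a k = if k = j then a else 0 :=
  Pi.single_apply j a k

noncomputable instance : One (CyclicLaurentAlgebra σ) := ⟨monomial σ 0 1⟩

theorem one_def : (1 : CyclicLaurentAlgebra σ) = monomial σ 0 1 := rfl

variable [NeZero (orderOf σ)]

/-- `(a u ^ j) (b u ^ m) = a σ ^ j (b) u ^ (j.val + m.val)`, and
`u ^ (j.val + m.val) = X ^ addCarry j m * u ^ (j + m).val`. -/
noncomputable instance : Mul (CyclicLaurentAlgebra σ) where
  mul d e k := ∑ j, d j * twist σ j.val (e (k - j)) * single (addCarry j (k - j) : ℤ) 1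

theorem mul_apply (d e : CyclicLaurentAlgebra σ) (k : ZMod (orderOf σ)) :
    (d * e) k = ∑ j, d j * twist σ j.val (e (k - j)) * single (addCarry j (k - j) : ℤ) 1 :=
  rfl

theorem monomial_mul_apply (j : ZMod (orderOf σ)) (a : LaurentSeries E)
    (d : CyclicLaurentAlgebra σ) (k : ZMod (orderOf σ)) :
    (monomial σ j a * d) k =
      a * twist σ j.val (d (k - j)) * single (addCarry j (k - j) : ℤ) 1 := by
  rw [mul_apply, Finset.sum_eq_single j] <;> simp +contextual [monomial_apply]

theorem mul_monomial_apply (j : ZMod (orderOf σ)) (a : LaurentSeries E)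
    (d : CyclicLaurentAlgebra σ) (k : ZMod (orderOf σ)) :
    (d * monomial σ j a) k =
      d (k - j) * twist σ (k - j).val a * single (addCarry (k - j) j : ℤ) 1 := by
  rw [mul_apply, Finset.sum_eq_single (k - j)]
  · simp [monomial_apply]
  · intro i _ hi
    simp [monomial_apply, show k - i ≠ j from fun h => hi (by rw [← h, sub_sub_cancel])]
  · simp

theorem single_mul_single_one (a b : ℕ) :
    (single (a : ℤ) (1 : E) * single (b : ℤ) 1 : LaurentSeries E) =
      single ((a + b : ℕ) : ℤ) 1 := by
  rw [single_mul_single, one_mul, Nat.cast_add]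

protected theorem mul_assoc (d e f : CyclicLaurentAlgebra σ) : d * e * f = d * (e * f) := by
  funext k
  simp only [mul_apply, Finset.sum_mul, Finset.mul_sum, map_sum, map_mul, twist_single,
    map_one]
  rw [Finset.sum_comm]
  refine Finset.sum_congr rfl fun j _ => Fintype.sum_equiv (Equiv.subRight j) _ _ fun i => ?_
  have hcarry := addCarry_add_addCarry j (i - j) (k - i)
  rw [add_sub_cancel, show i - j + (k - i) = k - j by abel] at hcarry
  simp only [Equiv.subRight_apply, sub_sub_sub_cancel_right, twist_twist_val, add_sub_cancel]
  calc _ = d j * twist σ j.val (e (i - j)) * twist σ i.val (f (k - i)) *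
        (single (addCarry j (i - j) : ℤ) 1 * single (addCarry i (k - i) : ℤ) 1) := by ring
    _ = d j * twist σ j.val (e (i - j)) * twist σ i.val (f (k - i)) *
        (single (addCarry (i - j) (k - i) : ℤ) 1 * single (addCarry j (k - j) : ℤ) 1) := by
      rw [single_mul_single_one, single_mul_single_one, hcarry]
    _ = _ := by ring

noncomputable instance : Ring (CyclicLaurentAlgebra σ) where
  __ := (inferInstance : AddCommGroup (CyclicLaurentAlgebra σ))
  mul_assoc := CyclicLaurentAlgebra.mul_assoc σ
  one_mul d := funext fun k => by simp [one_def, monomial_mul_apply]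
  mul_one d := funext fun k => by simp [one_def, mul_monomial_apply]
  left_distrib d e f := funext fun k => by
    simp only [add_apply, mul_apply, map_add, mul_add, add_mul, Finset.sum_add_distrib]
  right_distrib d e f := funext fun k => by
    simp only [add_apply, mul_apply, add_mul, Finset.sum_add_distrib]
  zero_mul d := funext fun k => by simp [mul_apply]
  mul_zero d := funext fun k => by simp [mul_apply]

noncomputable def ofLaurent : LaurentSeries E →+* CyclicLaurentAlgebra σ where
  toFun := monomial σ 0
  map_one' := rfl
  map_mul' a b := funext fun k => by
    rw [monomial_mul_apply]
    by_cases hk : k = 0 <;> simp [monomial_apply, hk]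
  map_zero' := funext fun k => by simp [monomial_apply]
  map_add' a b := funext fun k => by by_cases hk : k = 0 <;> simp [monomial_apply, hk]

theorem ofLaurent_apply (a : LaurentSeries E) : ofLaurent σ a = monomial σ 0 a := rfl

theorem ofLaurent_mul_apply (a : LaurentSeries E) (d : CyclicLaurentAlgebra σ)
    (k : ZMod (orderOf σ)) : (ofLaurent σ a * d) k = a * d k := by
  simp [ofLaurent_apply, monomial_mul_apply]

theorem mul_ofLaurent_apply (d : CyclicLaurentAlgebra σ) (a : LaurentSeries E)
    (k : ZMod (orderOf σ)) : (d * ofLaurent σ a) k = d k * twist σ k.val a := by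
  simp [ofLaurent_apply, mul_monomial_apply]

noncomputable instance : Algebra (LaurentSeries F) (CyclicLaurentAlgebra σ) :=
  RingHom.toAlgebra' ((ofLaurent σ).comp (mapRingHom (algebraMap F E))) fun f d =>
    funext fun k => by
      simp [ofLaurent_mul_apply, mul_ofLaurent_apply, twist_map_algebraMap, mul_comm]

theorem algebraMap_eq (f : LaurentSeries F) :
    algebraMap (LaurentSeries F) (CyclicLaurentAlgebra σ) f =
      ofLaurent σ (f.map (algebraMap F E)) :=
  rfl

theorem smul_apply (f : LaurentSeries F) (d : CyclicLaurentAlgebra σ) (k : ZMod (orderOf σ)) :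
    (f • d) k = f.map (algebraMap F E) * d k := by
  rw [Algebra.smul_def, algebraMap_eq, ofLaurent_mul_apply]

end Ring

variable {σ : E ≃ₐ[F] E} [NeZero (orderOf σ)]

section Domain

/-- The `u`-adic order of `d j * u ^ j.val`. -/
noncomputable def uOrder (d : CyclicLaurentAlgebra σ) (j : ZMod (orderOf σ)) : ℤ :=
  orderOf σ * (d j).order + j.val

theorem exists_min_uOrder {d : CyclicLaurentAlgebra σ} (hd : d ≠ 0) :
    ∃ j, d j ≠ 0 ∧ ∀ i, d i ≠ 0 → uOrder d j ≤ uOrder d i := by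
  classical
  obtain ⟨i, hi⟩ := Function.ne_iff.mp hd
  obtain ⟨j, hj, hmin⟩ :=
    (Finset.univ.filter (d · ≠ 0)).exists_min_image (uOrder d) ⟨i, by simpa⟩
  exact ⟨j, (Finset.mem_filter.mp hj).2, fun i hi => hmin i (by simpa)⟩

theorem uOrder_add_uOrder {d e : CyclicLaurentAlgebra σ} {j m : ZMod (orderOf σ)}
    (hd : d j ≠ 0) (he : e m ≠ 0) :
    uOrder d j + uOrder e m =
      orderOf σ * (d j * twist σ j.val (e m) * single (addCarry j m : ℤ) 1).order +
        (j + m).val := by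
  have he' : twist σ j.val (e m) ≠ 0 := (twist_eq_zero_iff σ _).not.mpr he
  rw [order_mul (mul_ne_zero hd he') (single_ne_zero one_ne_zero), order_mul hd he',
    order_twist, order_single one_ne_zero, uOrder, uOrder]
  have := val_add_val_eq j m
  push_cast [mul_add] at this ⊢
  linarith

protected theorem mul_ne_zero {d e : CyclicLaurentAlgebra σ} (hd : d ≠ 0) (he : e ≠ 0) :
    d * e ≠ 0 := by
  obtain ⟨j₀, hj₀, hd_min⟩ := exists_min_uOrder hd
  obtain ⟨m₀, hm₀, he_min⟩ := exists_min_uOrder he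
  have hN := uOrder_add_uOrder hj₀ hm₀
  set N := (d j₀ * twist σ j₀.val (e m₀) * single (addCarry j₀ m₀ : ℤ) 1).order
  have hn : (0 : ℤ) < orderOf σ := by exact_mod_cast Nat.pos_of_neZero _
  have hcoeff : ((d * e) (j₀ + m₀)).coeff N ≠ 0 := by
    rw [mul_apply, coeff_sum, Finset.sum_eq_single j₀]
    · rw [add_sub_cancel_left]
      exact coeff_order_eq_zero.not.mpr (mul_twist_mul_single_ne_zero σ hj₀ hm₀ _ _)
    · intro j _ hj
      by_cases hdj : d j = 0
      · simp [hdj]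
      by_cases hej : e (j₀ + m₀ - j) = 0
      · simp [hej]
      have hM := uOrder_add_uOrder hdj hej
      rw [add_sub_cancel] at hM
      have hlt : uOrder d j₀ < uOrder d j :=
        (hd_min j hdj).lt_of_ne fun h => hj (eq_of_mul_add_val_eq h).symm
      refine coeff_eq_zero_of_lt_order (lt_of_mul_lt_mul_left ?_ hn.le)
      linarith [he_min _ hej]
    · simp
  exact fun h => hcoeff (by rw [h]; rfl)

instance : Nontrivial (CyclicLaurentAlgebra σ) :=
  ⟨⟨1, 0, fun h => one_ne_zero (α := LaurentSeries E)
    (by simpa [one_def, monomial_apply] using congrFun h 0)⟩⟩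

instance : NoZeroDivisors (CyclicLaurentAlgebra σ) where
  eq_zero_or_eq_zero_of_mul_eq_zero {d e} h := by
    by_contra! hde
    exact CyclicLaurentAlgebra.mul_ne_zero hde.1 hde.2 h

instance : IsDomain (CyclicLaurentAlgebra σ) := NoZeroDivisors.to_isDomain _

end Domain

section Center

theorem apply_eq_zero_of_forall_commute {z : CyclicLaurentAlgebra σ}
    (hz : ∀ a, ofLaurent σ a * z = z * ofLaurent σ a) {k : ZMod (orderOf σ)} (hk : k ≠ 0) :
    z k = 0 := by
  obtain ⟨g, hg⟩ : ∃ g, (σ ^ k.val) g ≠ g := by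
    by_contra! h
    exact pow_ne_one_of_lt_orderOf ((val_ne_zero k).mpr hk) k.val_lt (AlgEquiv.ext h)
  have hcomm := congrFun (hz (single 0 g)) k
  rw [ofLaurent_mul_apply, mul_ofLaurent_apply, twist_single, mul_comm] at hcomm
  have hsub : z k * (single 0 g - single 0 ((σ ^ k.val) g)) = 0 := by
    rw [mul_sub, hcomm, sub_self]
  exact (mul_eq_zero.mp hsub).resolve_right (sub_ne_zero.mpr ((single_injective 0).ne hg.symm))

theorem twist_apply_zero_of_commute {z : CyclicLaurentAlgebra σ}
    (hz : monomial σ 1 1 * z = z * monomial σ 1 1) : twist σ 1 (z 0) = z 0 := by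
  simpa [monomial_mul_apply, mul_monomial_apply, twist_val_one] using congrFun hz 1

theorem center_eq_bot (hfix : ∀ x, σ x = x → x ∈ Set.range (algebraMap F E)) :
    Subalgebra.center (LaurentSeries F) (CyclicLaurentAlgebra σ) = ⊥ := by
  refine le_bot_iff.mp fun z hz => ?_
  rw [Subalgebra.mem_center_iff] at hz
  have hz_eq : z = ofLaurent σ (z 0) := funext fun k => by
    by_cases hk : k = 0
    · simp [hk, ofLaurent_apply, monomial_apply]
    · simp [ofLaurent_apply, monomial_apply, hk,
        apply_eq_zero_of_forall_commute (fun a => hz _) hk]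
  have hσ := twist_apply_zero_of_commute (hz _)
  obtain ⟨f, hf⟩ := exists_map_eq_of_coeff_mem_range (algebraMap F E).injective (z 0) fun g =>
    hfix _ (by simpa [coeff_twist] using congrArg (coeff · g) hσ)
  exact ⟨f, show algebraMap _ _ f = z by rw [algebraMap_eq, hf, ← hz_eq]⟩

end Center

section Dimension

variable {ι : Type*} [Fintype ι]

theorem linearCombination_monomial_apply (b : ι → E)
    (v : ZMod (orderOf σ) × ι → LaurentSeries F) (k : ZMod (orderOf σ)) :
    Fintype.linearCombination (LaurentSeries F)
        (fun x : ZMod (orderOf σ) × ι => monomial σ x.1 (single 0 (b x.2))) v k =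
      ∑ i, (v (k, i)).map (algebraMap F E) * single 0 (b i) := by
  rw [Fintype.linearCombination_apply, sum_apply, Fintype.sum_prod_type, Finset.sum_eq_single k]
  · simp [smul_apply, monomial_apply]
  · intro j _ hj
    simp [smul_apply, monomial_apply, Ne.symm hj]
  · simp

theorem bijective_linearCombination_monomial (b : Module.Basis ι F E) :
    Function.Bijective (Fintype.linearCombination (LaurentSeries F)
      fun x : ZMod (orderOf σ) × ι => monomial σ x.1 (single 0 (b x.2))) := by
  have : ⇑(Fintype.linearCombination (LaurentSeries F)
        fun x : ZMod (orderOf σ) × ι => monomial σ x.1 (single 0 (b x.2))) =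
      Pi.map (fun _ v => ∑ i, (v i).map (algebraMap F E) * single 0 (b i)) ∘
        Equiv.curry _ _ _ :=
    funext fun v => funext (linearCombination_monomial_apply b v)
  rw [this]
  exact (Function.Bijective.piMap fun _ => bijective_sum_map_algebraMap_mul_single b).comp
    (Equiv.curry _ _ _).bijective

variable (σ)

noncomputable def basis (b : Module.Basis ι F E) :
    Module.Basis (ZMod (orderOf σ) × ι) (LaurentSeries F) (CyclicLaurentAlgebra σ) :=
  .ofEquivFun (LinearEquiv.ofBijective _ (bijective_linearCombination_monomial b)).symm

variable [FiniteDimensional F E]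

instance : FiniteDimensional (LaurentSeries F) (CyclicLaurentAlgebra σ) :=
  Module.Finite.of_basis (basis σ (Module.finBasis F E))

theorem finrank_eq : Module.finrank (LaurentSeries F) (CyclicLaurentAlgebra σ) =
    orderOf σ * Module.finrank F E := by
  simp [Module.finrank_eq_card_basis (basis σ (Module.finBasis F E))]

end Dimension

end CyclicLaurentAlgebra

end CyclicAlgebra

theorem exists_centralDivisionAlgebraOver_of_isCyclic {F E : Type} [Field F] [Field E]
    [Algebra F E] [FiniteDimensional F E] [IsGalois F E] [IsCyclic Gal(E/F)] :
    Nonempty (CentralDivisionAlgebraOver (LaurentSeries F) (Module.finrank F E ^ 2)) := by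
  obtain ⟨σ, hσ⟩ := IsCyclic.exists_generator (α := Gal(E/F))
  have horder : orderOf σ = Module.finrank F E :=
    (orderOf_eq_card_of_forall_mem_zpowers hσ).trans (IsGalois.card_aut_eq_finrank F E)
  have : NeZero (orderOf σ) := ⟨horder ▸ Module.finrank_pos.ne'⟩
  have hfix : ∀ x, σ x = x → x ∈ Set.range (algebraMap F E) := fun x hx =>
    (IsGalois.mem_range_algebraMap_iff_fixed x).mpr fun τ =>
      Subgroup.zpowers_le.mpr (show σ ∈ MulAction.stabilizer Gal(E/F) x from hx) (hσ τ)
  let _ := divisionRingOfFiniteDimensional (LaurentSeries F) (CyclicLaurentAlgebra σ)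
  exact ⟨{ carrier := CyclicLaurentAlgebra σ
           center_eq := CyclicLaurentAlgebra.center_eq_bot hfix
           finrank_eq := by rw [CyclicLaurentAlgebra.finrank_eq, horder, sq] }⟩

theorem exists_central_division_algebra_laurent_general
    (p q : ℕ) [hp : Fact p.Prime] (hq : q.Prime) :
    Nonempty (CentralDivisionAlgebraOver (LaurentSeries (ZMod p)) (q ^ 2)) :=
  GaloisField.finrank p hq.ne_zero ▸ exists_centralDivisionAlgebraOver_of_isCyclic

/-- Let `q` and `p` be primes with `q ∣ p − 1`. Then there is a division algebra over the
field `𝔽_p((X))` of formal Laurent series over `𝔽_p`, central over `𝔽_p((X))` and of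
dimension `q²` over it. -/
theorem exists_central_division_algebra_laurent
    (p q : ℕ) [hp : Fact p.Prime] (hq : q.Prime) (hdvd : q ∣ p - 1) :
    Nonempty (CentralDivisionAlgebraOver (LaurentSeries (ZMod p)) (q ^ 2)) :=
  exists_central_division_algebra_laurent_general p q (hp := hp) hq
end
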